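/- Fix a finite set X of positive integers, let L = lcm(X), and let N_0 = max{F(X') : X' ⊆ X}, where F(X') is the largest multiple of gcd(X') that does not belong to Sg(X') (taken to be 0 if no such multiple exists). Then for every integer b > N_0 with b ∈ Sg(X), one has b + L ∈ Sg(X) and m_0(b + L) = m_0(b). -/

import Mathlib

/-- The numerical semigroup generated by the elements of `X`: all values of
nonnegative integer combinations of elements of `X`. -/
def SgN (X : Finset ℕ) : Set ℕ :=
  { b | ∃ lam : ℕ → ℕ, ∑ i ∈ X, lam i * i = b }

/-- `m0N X b` is the least number of nonzero coefficients in a representation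
of `b` as a nonnegative integer combination of the elements of `X`. -/
noncomputable def m0N (X : Finset ℕ) (b : ℕ) : ℕ :=
  sInf { k | ∃ lam : ℕ → ℕ, (∑ i ∈ X, lam i * i = b) ∧
    k = (X.filter fun i => lam i ≠ 0).card }

/-- The generalized Frobenius number of a finite set `Y` of positive integers:
the largest multiple of `gcd(Y)` not representable as a nonnegative integer
combination of `Y` (taken as `0` if no such multiple exists). -/
noncomputable def FrobGen (Y : Finset ℕ) : ℕ :=
  sSup { n | Y.gcd id ∣ n ∧ n ∉ SgN Y }

/-!
Shifting a representation of `b ≠ 0` by `L / x` copies of some generator `x` in its support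
represents `b + L` with the same support, so `m₀(b + L) ≤ m₀(b)`. Conversely, if `S` is the
support of an optimal representation of `b + L`, then `gcd S` divides `b + L` and `L`, hence `b`;
as `b > N₀ ≥ F(S)`, `b` is a combination of `S`, so `m₀(b) ≤ |S| = m₀(b + L)`.
-/

open Finset

lemma setGcd_coe_finset (S : Finset ℕ) : Nat.setGcd (S : Set ℕ) = S.gcd id :=
  Nat.dvd_antisymm (dvd_gcd fun _ hs => Nat.setGcd_dvd_of_mem hs)
    (Nat.dvd_setGcd_iff.mpr fun _ hs => gcd_dvd hs)

lemma mem_SgN_of_mem_closure {S : Finset ℕ} {n : ℕ}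
    (h : n ∈ AddSubmonoid.closure (S : Set ℕ)) : n ∈ SgN S := by
  obtain ⟨f, -, hf⟩ := AddSubmonoid.mem_closure_finset.mp h
  exact ⟨f, by simpa only [smul_eq_mul] using hf⟩

lemma le_FrobGen {S : Finset ℕ} {n : ℕ} (hd : S.gcd id ∣ n) (hn : n ∉ SgN S) :
    n ≤ FrobGen S := by
  obtain ⟨N, hN⟩ := Nat.exists_mem_closure_of_ge (S : Set ℕ)
  refine le_csSup ⟨N, fun m ⟨hdm, hm⟩ => ?_⟩ ⟨hd, hn⟩
  by_contra! hNm
  exact hm (mem_SgN_of_mem_closure (hN m hNm.le (setGcd_coe_finset S ▸ hdm)))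

lemma mem_SgN_of_FrobGen_lt {S : Finset ℕ} {n : ℕ} (hd : S.gcd id ∣ n) (h : FrobGen S < n) :
    n ∈ SgN S := by
  by_contra hn
  exact (le_FrobGen hd hn).not_gt h

section Representations

variable {X : Finset ℕ} {b : ℕ}

lemma m0N_le_card {lam : ℕ → ℕ} (h : ∑ i ∈ X, lam i * i = b) :
    m0N X b ≤ {i ∈ X | lam i ≠ 0}.card :=
  Nat.sInf_le ⟨lam, h, rfl⟩

lemma exists_card_eq_m0N (hb : b ∈ SgN X) :
    ∃ lam : ℕ → ℕ, ∑ i ∈ X, lam i * i = b ∧ {i ∈ X | lam i ≠ 0}.card = m0N X b := by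
  obtain ⟨lam, hlam⟩ := hb
  have hmin : m0N X b ∈ {k | ∃ mu : ℕ → ℕ, ∑ i ∈ X, mu i * i = b ∧
      k = {i ∈ X | mu i ≠ 0}.card} := Nat.sInf_mem ⟨_, lam, hlam, rfl⟩
  obtain ⟨mu, hmu, hcard⟩ := hmin
  exact ⟨mu, hmu, hcard.symm⟩

lemma m0N_le_card_of_subset {S : Finset ℕ} (hS : S ⊆ X) (hb : b ∈ SgN S) :
    m0N X b ≤ S.card := by
  classical
  obtain ⟨nu, hnu⟩ := hb
  let nu' : ℕ → ℕ := fun i => if i ∈ S then nu i else 0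
  have hsum : ∑ i ∈ X, nu' i * i = b := by
    rw [← sum_subset hS fun i _ hi => by simp [nu', hi], ← hnu]
    exact sum_congr rfl fun i hi => by simp [nu', hi]
  have hsupp : {i ∈ X | nu' i ≠ 0} ⊆ S := fun i hi => by
    by_contra hiS
    simp [nu', hiS] at hi
  exact (m0N_le_card hsum).trans (card_le_card hsupp)

lemma sum_add_single_mul {lam : ℕ → ℕ} {x : ℕ} (hx : x ∈ X) (k : ℕ) :
    ∑ i ∈ X, (lam + Pi.single x k : ℕ → ℕ) i * i = ∑ i ∈ X, lam i * i + k * x := by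
  simp only [Pi.add_apply, add_mul, sum_add_distrib, add_right_inj]
  rw [sum_eq_single_of_mem x hx fun i _ hix => by simp [hix]]
  simp

lemma filter_add_single_ne_zero {lam : ℕ → ℕ} {x : ℕ} (hx : lam x ≠ 0) (k : ℕ) :
    {i ∈ X | (lam + Pi.single x k : ℕ → ℕ) i ≠ 0} = {i ∈ X | lam i ≠ 0} := by
  refine filter_congr fun i _ => ?_
  by_cases hix : i = x
  · subst hix
    simp [hx]
  · simp [hix]

lemma add_mem_SgN_and_m0N_add_le {L : ℕ} (hbS : b ∈ SgN X) (hb : b ≠ 0) (hL : X.lcm id ∣ L) :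
    b + L ∈ SgN X ∧ m0N X (b + L) ≤ m0N X b := by
  obtain ⟨lam, hlam, hcard⟩ := exists_card_eq_m0N hbS
  obtain ⟨x, hxX, hx⟩ : ∃ x ∈ X, lam x ≠ 0 := by
    by_contra! h
    exact hb (hlam ▸ sum_eq_zero fun i hi => by simp [h i hi])
  have hxL : L / x * x = L := Nat.div_mul_cancel ((dvd_lcm hxX).trans hL)
  have hsum : ∑ i ∈ X, (lam + Pi.single x (L / x) : ℕ → ℕ) i * i = b + L := by
    rw [sum_add_single_mul hxX, hlam, hxL]
  refine ⟨⟨_, hsum⟩, ?_⟩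
  rw [← hcard, ← filter_add_single_ne_zero hx (L / x)]
  exact m0N_le_card hsum

lemma m0N_le_m0N_add {L : ℕ} (hFrob : ∀ S ⊆ X, FrobGen S < b) (hL : X.lcm id ∣ L)
    (hbS : b + L ∈ SgN X) : m0N X b ≤ m0N X (b + L) := by
  obtain ⟨mu, hmu, hcard⟩ := exists_card_eq_m0N hbS
  set S := {i ∈ X | mu i ≠ 0}
  have hSX : S ⊆ X := filter_subset _ _
  have hsumS : ∑ i ∈ S, mu i * i = b + L := by
    rw [← hmu]
    exact sum_filter_of_ne fun i _ h h0 => h (by rw [h0, zero_mul])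
  have hgcd_add : S.gcd id ∣ b + L :=
    hsumS ▸ dvd_sum fun i hi => (gcd_dvd hi).mul_left _
  obtain ⟨s, hs⟩ : S.Nonempty := by
    rw [nonempty_iff_ne_empty]
    intro hS
    rw [hS, sum_empty] at hsumS
    have := hFrob ∅ (empty_subset X)
    omega
  have hgcd_L : S.gcd id ∣ L := (gcd_dvd hs).trans ((dvd_lcm (hSX hs)).trans hL)
  have hgcd : S.gcd id ∣ b := (Nat.dvd_add_left hgcd_L).mp hgcd_add
  rw [← hcard]
  exact m0N_le_card_of_subset hSX (mem_SgN_of_FrobGen_lt hgcd (hFrob S hSX))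

end Representations

theorem m0_eventually_periodic_general (X : Finset ℕ)
    (L : ℕ) (hL : L = X.lcm id)
    (N0 : ℕ) (hN0 : N0 = X.powerset.sup FrobGen)
    (b : ℕ) (hb : N0 < b) (hbS : b ∈ SgN X) :
    b + L ∈ SgN X ∧ m0N X (b + L) = m0N X b := by
  subst hL hN0
  obtain ⟨hmem, hle⟩ := add_mem_SgN_and_m0N_add_le hbS (by omega) dvd_rfl
  have hFrob : ∀ S ⊆ X, FrobGen S < b := fun S hS =>
    (le_sup (f := FrobGen) (mem_powerset.mpr hS)).trans_lt hb
  exact ⟨hmem, hle.antisymm (m0N_le_m0N_add hFrob dvd_rfl hmem)⟩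

/-- **Theorem 4 (first part).** Fix a finite set `X` of positive integers, let
`L = lcm(X)` and `N₀ = max {F(X') : X' ⊆ X}`.  Then every `b > N₀` in `Sg(X)`
satisfies `b + L ∈ Sg(X)` and `m₀(b + L) = m₀(b)`. -/
theorem m0_eventually_periodic (X : Finset ℕ) (hpos : ∀ n ∈ X, 0 < n)
    (L : ℕ) (hL : L = X.lcm id)
    (N0 : ℕ) (hN0 : N0 = X.powerset.sup FrobGen)
    (b : ℕ) (hb : N0 < b) (hbS : b ∈ SgN X) :
    b + L ∈ SgN X ∧ m0N X (b + L) = m0N X b :=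
  m0_eventually_periodic_general X L hL N0 hN0 b hb hbS
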